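/- arXiv:0908.4500 — 4 statements merged into one kernel-verified Lean document; each statement's English description precedes it below -/
import Mathlib

section
/- For all real numbers g ≥ 0 and R ≥ 1 with g + 3R ≥ 752 one has J_b(g,R) ≥ J_f(g,R), i.e. (24/11)g + (17/11)R + 18/11 ≥ (29/14)g + (17/14)R + 31/28 + sqrt((g+3R)²/196 + (1067/196)g + (513/196)R + 793/784). -/
/-- For all reals `g ≥ 0`, `R ≥ 1` with `g + 3R ≥ 752`, `J_b(g,R) ≥ J_f(g,R)`. -/
theorem Jb_ge_Jf (g R : ℝ) (hg : g ≥ 0) (hR : R ≥ 1) (h : g + 3 * R ≥ 752) :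
    (24 / 11) * g + (17 / 11) * R + 18 / 11 ≥
      (29 / 14) * g + (17 / 14) * R + 31 / 28 +
        Real.sqrt ((g + 3 * R) ^ 2 / 196 + (1067 / 196) * g +
          (513 / 196) * R + 793 / 784) := by
  set X : ℝ := (g + 3 * R) ^ 2 / 196 + (1067 / 196) * g + (513 / 196) * R + 793 / 784 with hXdef
  set Y : ℝ := (34 * g + 102 * R + 163) / 308 with hYdef
  have hY : 0 ≤ Y := by positivity
  have hXY : X ≤ Y ^ 2 := by
    simp only [hXdef, hYdef]
    nlinarith [sq_nonneg (g + 3 * R), mul_nonneg (sub_nonneg.mpr h) (sub_nonneg.mpr h),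
      mul_nonneg hg hg, hR, h]
  have : Real.sqrt X ≤ Y := by
    calc Real.sqrt X ≤ Real.sqrt (Y ^ 2) := Real.sqrt_le_sqrt hXY
    _ = Y := Real.sqrt_sq hY
  simp only [hYdef] at this
  linarith
end

section
/- For all real numbers g ≥ 0 and R ≥ 1 with g + 3R ≥ 752 (equivalently g ≥ 752 − 3R), the quantity J_b(g,R) is greater than or equal to each of J_a(g,R), J_c(g,R), J_d(g,R), J_e(g,R), J_f(g,R); equivalently max(J_a, J_b, J_c, J_d, J_e, J_f)(g,R) = J_b(g,R). -/
lemma sqrt_le_of_sq {x y : ℝ} (hy : 0 ≤ y) (hxy : x ≤ y ^ 2) : Real.sqrt x ≤ y := by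
  calc Real.sqrt x ≤ Real.sqrt (y ^ 2) := Real.sqrt_le_sqrt hxy
  _ = y := Real.sqrt_sq hy

/-- For all reals `g ≥ 0`, `R ≥ 1` with `g + 3R ≥ 752`, `J_b(g,R)` dominates
each of `J_a, J_c, J_d, J_e, J_f` at `(g,R)`. -/
theorem Jb_is_max (g R : ℝ) (hg : g ≥ 0) (hR : R ≥ 1) (h : g + 3 * R ≥ 752) :
    (24 / 11) * g + (17 / 11) * R + 18 / 11 ≥ 2 * g + 3 + R ∧
    (24 / 11) * g + (17 / 11) * R + 18 / 11 ≥
      2 * g + R + 2 / 3 + Real.sqrt ((20 / 3) * g + 4 * R + 22 / 9) ∧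
    (24 / 11) * g + (17 / 11) * R + 18 / 11 ≥
      2 * g + R - 1 / 4 + Real.sqrt (7 * g + 5 * R + 177 / 16) ∧
    (24 / 11) * g + (17 / 11) * R + 18 / 11 ≥
      (36 / 17) * g + (23 / 17) * R + 18 / 17 ∧
    (24 / 11) * g + (17 / 11) * R + 18 / 11 ≥
      (29 / 14) * g + (17 / 14) * R + 31 / 28 +
        Real.sqrt ((g + 3 * R) ^ 2 / 196 + (1067 / 196) * g +
          (513 / 196) * R + 793 / 784) := by
  refine ⟨by linarith, ?_, ?_, by linarith, ?_⟩
  · have := sqrt_le_of_sq (x := (20 / 3) * g + 4 * R + 22 / 9)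
      (y := (2/11) * g + (6/11) * R + 32/33) (by linarith) (by nlinarith [sq_nonneg (g + 3*R - 752), sq_nonneg (g - R)])
    linarith
  · have := sqrt_le_of_sq (x := 7 * g + 5 * R + 177 / 16)
      (y := (2/11) * g + (6/11) * R + 18/11 + 1/4) (by linarith) (by nlinarith [sq_nonneg (g + 3*R - 752), sq_nonneg (g - R)])
    linarith
  · have := sqrt_le_of_sq (x := (g + 3 * R) ^ 2 / 196 + (1067 / 196) * g + (513 / 196) * R + 793 / 784)
      (y := (17/154) * g + (51/154) * R + 163/308) (by linarith) (by nlinarith [sq_nonneg (g + 3*R - 752), sq_nonneg (g - R), mul_nonneg hg (sub_nonneg.mpr hR)])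
    linarith
end

section
/- For all integers g ≥ 0 and R ≥ 1 with g + 3R ≤ 752, except for the two pairs (g,R) = (0,1) and (g,R) = (0,2), the integer part of J(g,R) := max(J_a(g,R), J_b(g,R), J_c(g,R), J_d(g,R), J_e(g,R), J_f(g,R)) satisfies ⌊J(g,R)⌋ ≤ 4g + 2R + 1. -/
/-- For all integers `g ≥ 0`, `R ≥ 1` with `g + 3R ≤ 752`, except
`(g,R) = (0,1)` and `(g,R) = (0,2)`, the integer part of
`J(g,R) = max(J_a, J_b, J_c, J_d, J_e, J_f)(g,R)` is at most `4g + 2R + 1`. -/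
theorem floor_J_le (g R : ℤ) (hg : 0 ≤ g) (hR : 1 ≤ R)
    (h : g + 3 * R ≤ 752)
    (h1 : ¬(g = 0 ∧ R = 1)) (h2 : ¬(g = 0 ∧ R = 2)) :
    ⌊max (2 * (g : ℝ) + 3 + R)
      (max ((24 / 11) * (g : ℝ) + (17 / 11) * R + 18 / 11)
      (max (2 * (g : ℝ) + R + 2 / 3 + Real.sqrt ((20 / 3) * g + 4 * R + 22 / 9))
      (max (2 * (g : ℝ) + R - 1 / 4 + Real.sqrt (7 * g + 5 * R + 177 / 16))
      (max ((36 / 17) * (g : ℝ) + (23 / 17) * R + 18 / 17)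
      ((29 / 14) * (g : ℝ) + (17 / 14) * R + 31 / 28 +
        Real.sqrt (((g : ℝ) + 3 * R) ^ 2 / 196 + (1067 / 196) * g +
          (513 / 196) * R + 793 / 784))))))⌋ ≤ 4 * g + 2 * R + 1 := by
  have hb : (3 : ℤ) ≤ 2 * g + R := by omega
  rw [Int.floor_le_iff]
  push_cast
  have hg' : (0:ℝ) ≤ (g:ℝ) := by exact_mod_cast hg
  have hR' : (1:ℝ) ≤ (R:ℝ) := by exact_mod_cast hR
  have hb' : (3:ℝ) ≤ 2 * (g:ℝ) + R := by exact_mod_cast hb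
  refine max_lt (by linarith) (max_lt (by linarith) (max_lt ?_ (max_lt ?_
    (max_lt (by linarith) ?_))))
  · have h3 : Real.sqrt ((20/3) * (g:ℝ) + 4 * R + 22/9) < 2 * g + R + 4/3 := by
      rw [Real.sqrt_lt' (by linarith)]
      nlinarith [mul_nonneg (by linarith : (0:ℝ) ≤ 2*(g:ℝ)+R-3)
        (by linarith : (0:ℝ) ≤ 2*(g:ℝ)+R), hg', hR']
    linarith
  · have h4 : Real.sqrt (7 * (g:ℝ) + 5 * R + 177/16) < 2 * g + R + 9/4 := by
      rw [Real.sqrt_lt' (by linarith)]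
      nlinarith [mul_nonneg (by linarith : (0:ℝ) ≤ 2*(g:ℝ)+R-3)
        (by linarith : (0:ℝ) ≤ 2*(g:ℝ)+R), hg', hR']
    linarith
  · have h6 : Real.sqrt (((g:ℝ) + 3 * R) ^ 2 / 196 + (1067/196) * g +
        (513/196) * R + 793/784) < (54 * (g:ℝ) + 22 * R + 25) / 28 := by
      rw [Real.sqrt_lt' (by linarith)]
      nlinarith [mul_nonneg (by linarith : (0:ℝ) ≤ (R:ℝ)-1)
          (by linarith : (0:ℝ) ≤ 2*(g:ℝ)+R-3),
        mul_nonneg hg' (by linarith : (0:ℝ) ≤ 2*(g:ℝ)+R-3),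
        mul_nonneg hg' hg', mul_nonneg hg' (by linarith : (0:ℝ) ≤ (R:ℝ)),
        mul_nonneg (by linarith : (0:ℝ) ≤ (R:ℝ)-1) (by linarith : (0:ℝ) ≤ (R:ℝ)-1)]
    linarith
end

section
/- Let p, q, g, N be real numbers with g ≥ 0, q ≥ p + 1, p ≥ N + 1 − 2g, N ≥ 2g + 3, 11N ≥ 24g + 20, and N > 2g + 2/3 + sqrt((20/3)g + 28/9). Then (p − 1)(q − 1) − (p + 2g − N + 1)(q + 2g − (5/6)N + 1/3) − 2g − 2N + p − q + 3 > 0. -/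
/-- Positivity of `Δ₃` in the proof of Theorem 1. -/
theorem Delta3_pos (p q g N : ℝ) (hg : g ≥ 0) (hq : q ≥ p + 1)
    (hp : p ≥ N + 1 - 2 * g) (hA : N ≥ 2 * g + 3)
    (hB : 11 * N ≥ 24 * g + 20)
    (hC : N > 2 * g + 2 / 3 + Real.sqrt ((20 / 3) * g + 28 / 9)) :
    (p - 1) * (q - 1) -
      (p + 2 * g - N + 1) * (q + 2 * g - (5 / 6) * N + 1 / 3) -
      2 * g - 2 * N + p - q + 3 > 0 := by
  set s := Real.sqrt ((20 / 3) * g + 28 / 9) with hs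
  have hS : (20 / 3) * g + 28 / 9 ≥ 0 := by nlinarith
  have hs2 : s ^ 2 = (20 / 3) * g + 28 / 9 := Real.sq_sqrt hS
  have hs0 : s ≥ 0 := Real.sqrt_nonneg _
  nlinarith [mul_nonneg (by linarith : q - p - 1 ≥ 0) (by linarith : N - 2 * g - 3 ≥ 0),
    mul_nonneg (by linarith : p - (N + 1 - 2 * g) ≥ 0) (by linarith : (11/6) * N - 4 * g - 10/3 ≥ 0),
    mul_pos (by linarith : N - 2 * g - 2/3 - s > 0) (by linarith : N - 2 * g - 2/3 + s > 0),
    hs2]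
end
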